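/- arXiv:2007.12040 — 2 statements merged into one kernel-verified Lean document; each statement's English description precedes it below -/
import Mathlib

section
/- For every ε ∈ (−1,1) and every real z with |z| < 1, the generating function of the return probabilities satisfies the exact identity (Σ_{n≥0} P_n z^n) · (Σ_{n≥0} (ε/2)_n ((ε+1)/2)_n / (n!)² · z^{2n}) = Σ_{n≥0} ((ε+2)/2)_n ((ε+1)/2)_n / (n!)² · z^{2n}; equivalently, Σ_{n≥0} P_n z^n = ₂F₁(ε/2+1, ε/2+1/2; 1; z²) / ₂F₁(ε/2, ε/2+1/2; 1; z²). -/
/-- Probability of a right step in the Gillis walk. -/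
noncomputable def gR (ε : ℝ) (j : ℤ) : ℝ :=
  if j = 0 then 1 / 2 else (1 - ε / (j : ℝ)) / 2

/-- Probability of a left step in the Gillis walk. -/
noncomputable def gL (ε : ℝ) (j : ℤ) : ℝ :=
  if j = 0 then 1 / 2 else (1 + ε / (j : ℝ)) / 2

/-- Occupation probabilities of the Gillis walk started at the origin:
`gP ε n j` is the probability of being at site `j` after `n` steps. -/
noncomputable def gP (ε : ℝ) : ℕ → ℤ → ℝ
  | 0, j => if j = 0 then 1 else 0
  | n + 1, j => gR ε (j - 1) * gP ε n (j - 1) + gL ε (j + 1) * gP ε n (j + 1)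

/-- Pochhammer symbol `(x)ₙ = x (x+1) ⋯ (x+n-1)`. -/
noncomputable def poch (x : ℝ) (n : ℕ) : ℝ := ∏ i ∈ Finset.range n, (x + i)

/-!
The series `ψ_j(z) = ∑_q (1+ε)_{j+2q} / (2^{j+2q} (j+q)! q!) z^{j+2q}` satisfy
`ψ_{|j|} = z (R(j) ψ_{|j+1|} + L(j) ψ_{|j-1|})` for every `j ≠ 0`, and for `|z| < 1` they are
bounded uniformly in `j`. Hence `S_N = z^N ∑_j P_N(j) ψ_{|j|}` only changes through the mass at
the origin, `S_{N+1} = S_N - P_N z^N (ψ_0 - z ψ_1)`, so that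
`ψ_0 - S_N = (∑_{n<N} P_n z^n) (ψ_0 - z ψ_1)`, while `S_N → 0`. By the duplication formula
`(x)_{2n} = 4^n (x/2)_n ((x+1)/2)_n`, `ψ_0` and `ψ_0 - z ψ_1` are the two hypergeometric series.
-/

open Finset Filter Topology
open scoped Nat

lemma poch_succ_right (x : ℝ) (n : ℕ) : poch x (n + 1) = poch x n * (x + n) := by
  simp [poch, prod_range_succ]

lemma poch_succ_left (x : ℝ) (n : ℕ) : poch x (n + 1) = x * poch (x + 1) n := by
  induction n with
  | zero => simp [poch]
  | succ n ih =>
    rw [poch_succ_right, ih, poch_succ_right]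
    push_cast
    ring

lemma poch_two_mul (x : ℝ) (n : ℕ) :
    poch x (2 * n) = 4 ^ n * poch (x / 2) n * poch ((x + 1) / 2) n := by
  induction n with
  | zero => simp [poch]
  | succ n ih =>
    rw [show 2 * (n + 1) = 2 * n + 1 + 1 by ring, poch_succ_right, poch_succ_right, ih,
      poch_succ_right, poch_succ_right]
    push_cast
    ring

lemma poch_nonneg {x : ℝ} (hx : 0 ≤ x) (n : ℕ) : 0 ≤ poch x n :=
  prod_nonneg fun i _ => by positivity

lemma poch_le_poch {x y : ℝ} (hx : 0 ≤ x) (hxy : x ≤ y) (n : ℕ) : poch x n ≤ poch y n :=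
  prod_le_prod (fun i _ => by positivity) fun i _ => by linarith

lemma poch_two (n : ℕ) : poch 2 n = (n + 1)! := by
  induction n with
  | zero => simp [poch]
  | succ n ih =>
    rw [poch_succ_right, ih]
    push_cast [Nat.factorial_succ]
    ring

lemma poch_half_mul_poch_half_div_sq (x : ℝ) (n : ℕ) :
    poch (x / 2) n * poch ((x + 1) / 2) n / (n ! : ℝ) ^ 2 =
      poch x (2 * n) / (4 ^ n * (n ! : ℝ) ^ 2) := by
  rw [poch_two_mul]
  field_simp

lemma Nat.factorial_add_le (a b : ℕ) : (a + b)! ≤ 2 ^ (a + b) * a ! * b ! := by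
  rw [← Nat.add_choose_mul_factorial_mul_factorial]
  gcongr
  exact Nat.choose_le_two_pow _ _

noncomputable def psiCoeff (ε : ℝ) (j q : ℕ) : ℝ :=
  poch (1 + ε) (j + 2 * q) / (2 ^ (j + 2 * q) * (j + q)! * q !)

lemma psiCoeff_nonneg {ε : ℝ} (hε : -1 ≤ ε) (j q : ℕ) : 0 ≤ psiCoeff ε j q :=
  div_nonneg (poch_nonneg (by linarith) _) (by positivity)

lemma psiCoeff_le {ε : ℝ} (hε : |ε| ≤ 1) (j q : ℕ) :
    psiCoeff ε j q ≤ ((j + 2 * q : ℕ) : ℝ) + 1 := by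
  obtain ⟨hε₁, hε₂⟩ := abs_le.mp hε
  have hm : j + 2 * q = (j + q) + q := by ring
  have hfact : ((j + 2 * q)! : ℝ) ≤ 2 ^ (j + 2 * q) * (j + q)! * q ! := by
    rw [hm]
    exact_mod_cast Nat.factorial_add_le (j + q) q
  rw [psiCoeff, div_le_iff₀ (by positivity)]
  calc poch (1 + ε) (j + 2 * q) ≤ poch 2 (j + 2 * q) := poch_le_poch (by linarith) (by linarith) _
    _ = (((j + 2 * q : ℕ) : ℝ) + 1) * (j + 2 * q)! := by
      rw [poch_two, Nat.factorial_succ]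
      push_cast
      ring
    _ ≤ _ := by gcongr

lemma psiCoeff_succ_zero (ε : ℝ) (j : ℕ) :
    psiCoeff ε (j + 1) 0 = (1 + ε / (j + 1)) / 2 * psiCoeff ε j 0 := by
  simp only [psiCoeff, mul_zero, add_zero, poch_succ_right, Nat.factorial_succ, pow_succ]
  push_cast
  field_simp
  ring

lemma psiCoeff_succ_succ (ε : ℝ) (j q : ℕ) :
    psiCoeff ε (j + 1) (q + 1) =
      (1 - ε / (j + 1)) / 2 * psiCoeff ε (j + 2) q +
        (1 + ε / (j + 1)) / 2 * psiCoeff ε j (q + 1) := by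
  have e₁ : j + 1 + 2 * (q + 1) = j + 2 * q + 2 + 1 := by ring
  have e₂ : j + 2 + 2 * q = j + 2 * q + 2 := by ring
  have e₃ : j + 2 * (q + 1) = j + 2 * q + 2 := by ring
  have e₄ : j + 1 + (q + 1) = j + q + 1 + 1 := by ring
  have e₅ : j + 2 + q = j + q + 1 + 1 := by ring
  simp only [psiCoeff, e₁, e₂, e₃, e₄, e₅, ← add_assoc, poch_succ_right, Nat.factorial_succ,
    pow_succ]
  push_cast
  field_simp
  ring

lemma psiCoeff_zero_left (ε : ℝ) (n : ℕ) :
    psiCoeff ε 0 n = poch (ε + 1) (2 * n) / (4 ^ n * (n ! : ℝ) ^ 2) := by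
  rw [psiCoeff, zero_add, zero_add, pow_mul, add_comm 1 ε]
  norm_num [sq]
  ring

lemma psiCoeff_zero_succ_sub_psiCoeff_one (ε : ℝ) (n : ℕ) :
    psiCoeff ε 0 (n + 1) - psiCoeff ε 1 n =
      poch ε (2 * (n + 1)) / (4 ^ (n + 1) * ((n + 1)! : ℝ) ^ 2) := by
  have h₀ : poch (ε + 1) (2 * (n + 1)) = poch (ε + 1) (2 * n + 1) * (ε + 1 + (2 * n + 1 : ℕ)) :=
    poch_succ_right _ _
  have h₁ : psiCoeff ε 1 n = poch (ε + 1) (2 * n + 1) / (2 ^ (2 * n + 1) * (n + 1)! * n !) := by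
    rw [psiCoeff, add_comm 1 ε, add_comm 1 (2 * n), add_comm 1 n]
  have h₂ : poch ε (2 * (n + 1)) = ε * poch (ε + 1) (2 * n + 1) := poch_succ_left _ _
  rw [psiCoeff_zero_left, h₀, h₁, h₂, Nat.factorial_succ, pow_succ,
    show (4 : ℝ) ^ n = 2 ^ (2 * n) by rw [pow_mul]; norm_num]
  push_cast
  field_simp
  ring

lemma summable_succ_mul_pow {r : ℝ} (hr : ‖r‖ < 1) :
    Summable fun m : ℕ => ((m : ℝ) + 1) * r ^ m := by
  simpa only [pow_one, add_mul, one_mul] using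
    (summable_pow_mul_geometric_of_norm_lt_one 1 hr).add (summable_geometric_of_norm_lt_one hr)

noncomputable def psi (ε z : ℝ) (j : ℕ) : ℝ := ∑' q : ℕ, psiCoeff ε j q * z ^ (j + 2 * q)

section psi

variable {ε z : ℝ} (hε : |ε| ≤ 1) (hz : |z| < 1)

lemma add_two_mul_injective (j : ℕ) : Function.Injective fun q : ℕ => j + 2 * q :=
  fun _ _ h => by simp only at h; omega

include hε in
lemma norm_psiCoeff_mul_pow_le (j q : ℕ) :
    ‖psiCoeff ε j q * z ^ (j + 2 * q)‖ ≤ (((j + 2 * q : ℕ) : ℝ) + 1) * |z| ^ (j + 2 * q) := by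
  rw [norm_mul, Real.norm_of_nonneg (psiCoeff_nonneg (abs_le.mp hε).1 j q), norm_pow,
    Real.norm_eq_abs]
  gcongr
  exact psiCoeff_le hε j q

include hε hz in
lemma hasSum_psi (j : ℕ) : HasSum (fun q : ℕ => psiCoeff ε j q * z ^ (j + 2 * q)) (psi ε z j) :=
  Summable.hasSum <| .of_norm_bounded
    ((summable_succ_mul_pow (by rwa [Real.norm_eq_abs, abs_abs])).comp_injective
      (add_two_mul_injective j)) (norm_psiCoeff_mul_pow_le hε j)

include hε hz in
lemma abs_psi_le (j : ℕ) : |psi ε z j| ≤ ∑' m : ℕ, ((m : ℝ) + 1) * |z| ^ m := by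
  have hs := summable_succ_mul_pow (r := |z|) (by rwa [Real.norm_eq_abs, abs_abs])
  exact (tsum_of_norm_bounded (hs.comp_injective (add_two_mul_injective j)).hasSum
    (norm_psiCoeff_mul_pow_le hε j)).trans
    (tsum_comp_le_tsum_of_inj hs (fun m => by positivity) (add_two_mul_injective j))

include hε hz in
lemma hasSum_psi_tail (j : ℕ) :
    HasSum (fun q : ℕ => psiCoeff ε j (q + 1) * z ^ (j + 2 * (q + 1)))
      (psi ε z j - psiCoeff ε j 0 * z ^ j) := by
  have h := (hasSum_nat_add_iff' 1).mpr (hasSum_psi hε hz j)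
  simpa only [sum_range_one, mul_zero, add_zero] using h

include hε hz in
lemma psi_succ (j : ℕ) :
    psi ε z (j + 1) =
      z * ((1 - ε / (j + 1)) / 2 * psi ε z (j + 2) + (1 + ε / (j + 1)) / 2 * psi ε z j) := by
  set a := (1 - ε / (j + 1)) / 2
  set b := (1 + ε / (j + 1)) / 2
  have hterm : (fun q : ℕ => psiCoeff ε (j + 1) (q + 1) * z ^ (j + 1 + 2 * (q + 1))) = fun q =>
      z * (a * (psiCoeff ε (j + 2) q * z ^ (j + 2 + 2 * q)) +
        b * (psiCoeff ε j (q + 1) * z ^ (j + 2 * (q + 1)))) := by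
    ext q
    rw [psiCoeff_succ_succ]
    ring
  have htail := (((hasSum_psi hε hz (j + 2)).mul_left a).add
    ((hasSum_psi_tail hε hz j).mul_left b)).mul_left z
  rw [← hterm] at htail
  rw [(hasSum_psi hε hz (j + 1)).unique
      (htail.zero_add (f := fun q => psiCoeff ε (j + 1) q * z ^ (j + 1 + 2 * q))),
    psiCoeff_succ_zero]
  ring

include hε hz in
lemma hasSum_psi_zero :
    HasSum (fun n : ℕ => poch ((ε + 2) / 2) n * poch ((ε + 1) / 2) n / (n ! : ℝ) ^ 2 * z ^ (2 * n))
      (psi ε z 0) := by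
  have hcoeff (n : ℕ) : poch ((ε + 2) / 2) n * poch ((ε + 1) / 2) n / (n ! : ℝ) ^ 2 =
      psiCoeff ε 0 n := by
    have h := poch_half_mul_poch_half_div_sq (ε + 1) n
    rw [show (ε + 1 + 1) / 2 = (ε + 2) / 2 by ring] at h
    rw [mul_comm (poch ((ε + 2) / 2) n), h, psiCoeff_zero_left]
  simpa only [hcoeff, zero_add] using hasSum_psi hε hz 0

include hε hz in
lemma hasSum_psi_zero_sub :
    HasSum (fun n : ℕ => poch (ε / 2) n * poch ((ε + 1) / 2) n / (n ! : ℝ) ^ 2 * z ^ (2 * n))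
      (psi ε z 0 - z * psi ε z 1) := by
  have hterm : (fun n : ℕ => poch (ε / 2) (n + 1) * poch ((ε + 1) / 2) (n + 1) /
      ((n + 1)! : ℝ) ^ 2 * z ^ (2 * (n + 1))) = fun n =>
      psiCoeff ε 0 (n + 1) * z ^ (0 + 2 * (n + 1)) - z * (psiCoeff ε 1 n * z ^ (1 + 2 * n)) := by
    ext n
    rw [poch_half_mul_poch_half_div_sq, ← psiCoeff_zero_succ_sub_psiCoeff_one]
    ring
  have h := (hasSum_psi_tail hε hz 0).sub ((hasSum_psi hε hz 1).mul_left z)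
  rw [← hterm] at h
  convert h.zero_add (f := fun n : ℕ =>
    poch (ε / 2) n * poch ((ε + 1) / 2) n / (n ! : ℝ) ^ 2 * z ^ (2 * n)) using 1
  · rfl
  · simp only [psiCoeff, poch, range_zero, prod_empty, mul_zero, add_zero, pow_zero,
      Nat.factorial_zero, Nat.cast_one, one_pow, mul_one, div_one]
    ring

end psi

lemma sum_Icc_eq_sum_Icc_sub_add (g : ℤ → ℝ) (a b c : ℤ) :
    ∑ j ∈ Icc a b, g j = ∑ i ∈ Icc (a - c) (b - c), g (i + c) := by
  have h := sum_map (Icc (a - c) (b - c)) (addRightEmbedding c) g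
  rwa [map_add_right_Icc, sub_add_cancel, sub_add_cancel] at h

section walk

variable {ε : ℝ}

lemma gR_add_gL (ε : ℝ) (j : ℤ) : gR ε j + gL ε j = 1 := by
  unfold gR gL
  split_ifs <;> ring

lemma abs_div_intCast_le_one (hε : |ε| ≤ 1) {j : ℤ} (hj : j ≠ 0) : |ε / j| ≤ 1 := by
  rw [abs_div]
  exact div_le_one_of_le₀ (hε.trans (by exact_mod_cast Int.one_le_abs hj)) (abs_nonneg _)

lemma gR_nonneg (hε : |ε| ≤ 1) (j : ℤ) : 0 ≤ gR ε j := by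
  unfold gR
  split_ifs with hj
  · norm_num
  · linarith [(abs_le.mp (abs_div_intCast_le_one hε hj)).2]

lemma gL_nonneg (hε : |ε| ≤ 1) (j : ℤ) : 0 ≤ gL ε j := by
  unfold gL
  split_ifs with hj
  · norm_num
  · linarith [(abs_le.mp (abs_div_intCast_le_one hε hj)).1]

lemma gP_succ (ε : ℝ) (n : ℕ) (j : ℤ) :
    gP ε (n + 1) j = gR ε (j - 1) * gP ε n (j - 1) + gL ε (j + 1) * gP ε n (j + 1) := rfl

lemma gP_nonneg (hε : |ε| ≤ 1) (n : ℕ) (j : ℤ) : 0 ≤ gP ε n j := by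
  induction n generalizing j with
  | zero => unfold gP; split_ifs <;> norm_num
  | succ n ih =>
    rw [gP_succ]
    have := gR_nonneg hε (j - 1)
    have := gL_nonneg hε (j + 1)
    have := ih (j - 1)
    have := ih (j + 1)
    positivity

lemma gP_eq_zero_of_notMem_Icc {n : ℕ} {j : ℤ} (hj : j ∉ Icc (-(n : ℤ)) n) : gP ε n j = 0 := by
  induction n generalizing j with
  | zero => simp_all [gP]
  | succ n ih =>
    simp only [mem_Icc, not_and_or, not_le] at hj ih
    rw [gP_succ, ih (by omega), ih (by omega), mul_zero, mul_zero, add_zero]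

lemma sum_Icc_gP_mul_of_le {n : ℕ} {a b : ℤ} (ha : a ≤ -n) (hb : n ≤ b) (f : ℤ → ℝ) :
    ∑ j ∈ Icc a b, gP ε n j * f j = ∑ j ∈ Icc (-(n : ℤ)) n, gP ε n j * f j :=
  (sum_subset (Icc_subset_Icc ha hb) fun _ _ hj => by
    rw [gP_eq_zero_of_notMem_Icc hj, zero_mul]).symm

lemma sum_Icc_gP_succ_mul (n : ℕ) (f : ℤ → ℝ) :
    ∑ j ∈ Icc (-((n + 1 : ℕ) : ℤ)) (n + 1 : ℕ), gP ε (n + 1) j * f j =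
      ∑ j ∈ Icc (-(n : ℤ)) n, gP ε n j * (gR ε j * f (j + 1) + gL ε j * f (j - 1)) := by
  simp only [gP_succ, add_mul, mul_add, sum_add_distrib]
  rw [sum_Icc_eq_sum_Icc_sub_add _ _ _ 1, sum_Icc_eq_sum_Icc_sub_add (fun j => _ * f j) _ _ (-1)]
  simp only [add_sub_cancel_right, sub_neg_eq_add, sub_add_cancel, ← sub_eq_add_neg]
  rw [← sum_Icc_gP_mul_of_le (a := -((n + 1 : ℕ) : ℤ) - 1) (b := (n + 1 : ℕ) - 1)
      (by omega) (by omega),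
    ← sum_Icc_gP_mul_of_le (a := -((n + 1 : ℕ) : ℤ) + 1) (b := (n + 1 : ℕ) + 1)
      (by omega) (by omega)]
  congr 1 <;> exact sum_congr rfl fun j _ => by ring

lemma sum_Icc_gP (ε : ℝ) (n : ℕ) : ∑ j ∈ Icc (-(n : ℤ)) n, gP ε n j = 1 := by
  induction n with
  | zero => simp [gP]
  | succ n ih =>
    rw [← ih]
    simpa only [mul_one, gR_add_gL] using sum_Icc_gP_succ_mul (ε := ε) n fun _ => 1

lemma gP_le_one (hε : |ε| ≤ 1) (n : ℕ) (j : ℤ) : gP ε n j ≤ 1 := by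
  by_cases hj : j ∈ Icc (-(n : ℤ)) n
  · exact sum_Icc_gP ε n ▸ single_le_sum (fun i _ => gP_nonneg hε n i) hj
  · rw [gP_eq_zero_of_notMem_Icc hj]
    norm_num

end walk

section generatingFunction

variable {ε z : ℝ} (hε : |ε| ≤ 1) (hz : |z| < 1)

include hε hz in
lemma z_mul_step_psi (j : ℤ) :
    z * (gR ε j * psi ε z (j + 1).natAbs + gL ε j * psi ε z (j - 1).natAbs) =
      psi ε z j.natAbs + if j = 0 then z * psi ε z 1 - psi ε z 0 else 0 := by
  rcases lt_trichotomy j 0 with hj | rfl | hj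
  · obtain ⟨k, rfl⟩ : ∃ k : ℕ, j = -((k + 1 : ℕ) : ℤ) := ⟨(-j - 1).toNat, by omega⟩
    have e₁ : (-((k + 1 : ℕ) : ℤ) + 1).natAbs = k := by omega
    have e₂ : (-((k + 1 : ℕ) : ℤ) - 1).natAbs = k + 2 := by omega
    have e₃ : (-((k + 1 : ℕ) : ℤ)).natAbs = k + 1 := by omega
    rw [e₁, e₂, e₃, psi_succ hε hz k, gR, gL, if_neg hj.ne, if_neg hj.ne, if_neg hj.ne]
    push_cast [div_neg]
    ring
  · simp only [gR, gL, if_pos, zero_add, zero_sub, Int.natAbs_one, Int.natAbs_neg,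
      Int.natAbs_zero]
    ring
  · obtain ⟨k, rfl⟩ : ∃ k : ℕ, j = ((k + 1 : ℕ) : ℤ) := ⟨(j - 1).toNat, by omega⟩
    have e₁ : (((k + 1 : ℕ) : ℤ) + 1).natAbs = k + 2 := by omega
    have e₂ : (((k + 1 : ℕ) : ℤ) - 1).natAbs = k := by omega
    rw [e₁, e₂, Int.natAbs_natCast, psi_succ hε hz k, gR, gL, if_neg hj.ne', if_neg hj.ne',
      if_neg hj.ne']
    push_cast
    ring

include hε hz in
lemma pow_mul_sum_gP_mul_psi (N : ℕ) :
    z ^ N * ∑ j ∈ Icc (-(N : ℤ)) N, gP ε N j * psi ε z j.natAbs =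
      psi ε z 0 - (∑ n ∈ range N, gP ε n 0 * z ^ n) * (psi ε z 0 - z * psi ε z 1) := by
  induction N with
  | zero => simp [gP]
  | succ N ih =>
    calc z ^ (N + 1) * ∑ j ∈ Icc (-((N + 1 : ℕ) : ℤ)) (N + 1 : ℕ), gP ε (N + 1) j * psi ε z j.natAbs
        = z ^ N * ∑ j ∈ Icc (-(N : ℤ)) N, gP ε N j *
            (z * (gR ε j * psi ε z (j + 1).natAbs + gL ε j * psi ε z (j - 1).natAbs)) := by
          rw [sum_Icc_gP_succ_mul, pow_succ, mul_assoc, mul_sum]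
          congr 1
          exact sum_congr rfl fun j _ => by ring
      _ = z ^ N * ∑ j ∈ Icc (-(N : ℤ)) N, gP ε N j * psi ε z j.natAbs +
            z ^ N * gP ε N 0 * (z * psi ε z 1 - psi ε z 0) := by
          simp only [z_mul_step_psi hε hz, mul_add, sum_add_distrib, mul_ite, mul_zero,
            sum_ite_eq', mem_Icc, Left.neg_nonpos_iff, Nat.cast_nonneg, and_self, if_true]
          ring
      _ = _ := by
          rw [ih, sum_range_succ]
          ring

include hε hz in
lemma tendsto_pow_mul_sum_gP_mul_psi :
    Tendsto (fun N : ℕ => z ^ N * ∑ j ∈ Icc (-(N : ℤ)) N, gP ε N j * psi ε z j.natAbs)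
      atTop (𝓝 0) := by
  set B := ∑' m : ℕ, ((m : ℝ) + 1) * |z| ^ m
  refine squeeze_zero_norm (a := fun N => |z| ^ N * B) (fun N => ?_) ?_
  · rw [norm_mul, norm_pow, Real.norm_eq_abs]
    gcongr
    calc ‖∑ j ∈ Icc (-(N : ℤ)) N, gP ε N j * psi ε z j.natAbs‖
        ≤ ∑ j ∈ Icc (-(N : ℤ)) N, gP ε N j * B := by
          refine (norm_sum_le _ _).trans (sum_le_sum fun j _ => ?_)
          rw [norm_mul, Real.norm_of_nonneg (gP_nonneg hε N j), Real.norm_eq_abs]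
          exact mul_le_mul_of_nonneg_left (abs_psi_le hε hz _) (gP_nonneg hε N j)
      _ = B := by rw [← sum_mul, sum_Icc_gP, one_mul]
  · simpa using (tendsto_pow_atTop_nhds_zero_of_lt_one (abs_nonneg z) hz).mul_const B

include hε hz in
lemma summable_gP_zero_mul_pow : Summable fun n : ℕ => gP ε n 0 * z ^ n :=
  .of_norm_bounded (summable_geometric_of_lt_one (abs_nonneg z) hz) fun n => by
    rw [norm_mul, norm_pow, Real.norm_of_nonneg (gP_nonneg hε n 0), Real.norm_eq_abs]
    exact mul_le_of_le_one_left (by positivity) (gP_le_one hε n 0)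

include hε hz in
lemma tsum_gP_zero_mul_pow_mul :
    (∑' n : ℕ, gP ε n 0 * z ^ n) * (psi ε z 0 - z * psi ε z 1) = psi ε z 0 := by
  refine tendsto_nhds_unique
    ((summable_gP_zero_mul_pow hε hz).hasSum.mul_right _).tendsto_sum_nat ?_
  have h := (tendsto_pow_mul_sum_gP_mul_psi hε hz).const_sub (psi ε z 0)
  simpa only [pow_mul_sum_gP_mul_psi hε hz, sub_sub_cancel, sub_zero, sum_mul] using h

end generatingFunction

/-- The generating function of the return probabilities of the Gillis random walk equals
`₂F₁(ε/2+1, ε/2+1/2; 1; z²) / ₂F₁(ε/2, ε/2+1/2; 1; z²)`, stated multiplicatively. -/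
theorem gillis_generating_function (ε : ℝ) (hε : ε ∈ Set.Ioo (-1 : ℝ) 1)
    (z : ℝ) (hz : |z| < 1) :
    (∑' n : ℕ, gP ε n 0 * z ^ n) *
      (∑' n : ℕ, poch (ε / 2) n * poch ((ε + 1) / 2) n / ((n.factorial : ℝ)) ^ 2 * z ^ (2 * n)) =
    ∑' n : ℕ, poch ((ε + 2) / 2) n * poch ((ε + 1) / 2) n / ((n.factorial : ℝ)) ^ 2 * z ^ (2 * n) := by
  have hε' : |ε| ≤ 1 := (abs_lt.mpr hε).le
  rw [(hasSum_psi_zero_sub hε' hz).tsum_eq, (hasSum_psi_zero hε' hz).tsum_eq]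
  exact tsum_gP_zero_mul_pow_mul hε' hz
end

section
/- (Lamperti recurrence criterion.) Let (X_n)_{n≥0} be a time-homogeneous Markov chain on [0,∞) with uniformly bounded increments (there is B < ∞ with |X_{n+1} − X_n| ≤ B almost surely), and let μ_k(x) = E[(X_{n+1} − X_n)^k | X_n = x]. Suppose μ_2 is bounded away from 0 (there is δ > 0 with μ_2(x) ≥ δ for all x), and suppose there exist θ < 1 and r > 0 such that μ_1(x) ≤ θ μ_2(x)/(2x) for all x ≥ r. Then the chain is recurrent: almost surely liminf_{n→∞} X_n < ∞. -/
/-!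
`F(x) = log (max x 1)` is a Lyapunov function. For bounded increments, the exact second-order
bound `log y ≤ log x + (y - x)/x - (y - x)²/(2(x + B)²)` combined with the drift condition
and `θ (x + B)² ≤ x²` (true for large `x`, as `θ < 1`) gives `E[F(X_{n+1}) | X_n = x] ≤ F(x)`
above some level `a`. Hence `F(X_n)`, stopped when `X` first drops below `a` after time `N`, is a
nonnegative supermartingale with expectation at most `F(X_N)`; by Fatou its `liminf` is a.s.
finite, which is incompatible with `X_n → ∞`.
-/

open MeasureTheory ProbabilityTheory Filter

/-- The `k`-th moment of the increment of a Markov kernel at the point `x`: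
`μ_k(x) = ∫ (y − x)^k κ(x, dy)`. -/
noncomputable def mom (κ : Kernel ℝ ℝ) (k : ℕ) (x : ℝ) : ℝ := ∫ y, (y - x) ^ k ∂(κ x)

/-- `μ` is a trajectory (Ionescu–Tulcea) measure on path space `ℝ^ℕ` for the transition
kernel `κ`: for every `n`, conditionally on the first `n+1` coordinates, the `(n+1)`-st
coordinate is distributed according to `κ` applied to the `n`-th coordinate. -/
def IsMarkovTrajectory (κ : Kernel ℝ ℝ) (μ : Measure (ℕ → ℝ)) : Prop :=
  ∀ (n : ℕ) (s : Set ℝ), MeasurableSet s →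
    ∀ t : Set (ℕ → ℝ),
      MeasurableSet[MeasurableSpace.comap (fun (ω : ℕ → ℝ) (i : Fin (n + 1)) => ω i)
        inferInstance] t →
      μ (t ∩ {ω | ω (n + 1) ∈ s}) = ∫⁻ ω in t, κ (ω n) s ∂μ

open scoped ENNReal Topology

section LogBound

open Set Real

lemma log_le_taylor_of_abs_sub_le {x y B : ℝ} (hBx : B < x) (hy : |y - x| ≤ B) :
    log y ≤ log x + (y - x) / x - (y - x) ^ 2 / (2 * (x + B) ^ 2) := by
  set c := x + B
  have hB : 0 ≤ B := (abs_nonneg _).trans hy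
  have hx : 0 < x := hB.trans_lt hBx
  have hc : 0 < c := by positivity
  obtain ⟨hy₁, hy₂⟩ : x - B ≤ y ∧ y ≤ c := by constructor <;> linarith [abs_le.1 hy]
  set φ : ℝ → ℝ := fun t ↦ log x + (t - x) / x - (t - x) ^ 2 / (2 * c ^ 2) - log t
  set φ' : ℝ → ℝ := fun t ↦ (t - x) * (c ^ 2 - x * t) / (x * t * c ^ 2)
  have hφ' : ∀ t, 0 < t → HasDerivAt φ (φ' t) t := by
    intro t ht
    refine (((((hasDerivAt_id t).sub_const x).div_const x).const_add (log x)).sub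
      ((((hasDerivAt_id t).sub_const x).pow 2).div_const (2 * c ^ 2)) |>.sub
      (hasDerivAt_log ht.ne')).congr_deriv ?_
    dsimp only [id, φ']
    field_simp
    ring
  -- `φ'` has the sign of `t - x` on `[x - B, c]`, since there `x * t ≤ c ^ 2`.
  have hpos : ∀ t ∈ Icc (x - B) c, 0 < t ∧ 0 ≤ c ^ 2 - x * t := fun t ht ↦
    ⟨by linarith [ht.1], by nlinarith [ht.1, ht.2]⟩
  have hcont : ContinuousOn φ (Icc (x - B) c) := fun t ht ↦
    (hφ' t (hpos t ht).1).continuousAt.continuousWithinAt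
  have hanti : AntitoneOn φ (Icc (x - B) x) := by
    refine antitoneOn_of_hasDerivWithinAt_nonpos (f' := φ') (convex_Icc _ _)
      (hcont.mono (Icc_subset_Icc_right (by linarith))) (fun t ht ↦ ?_) fun t ht ↦ ?_
    all_goals
      rw [interior_Icc] at ht
      obtain ⟨ht₀, hct⟩ := hpos t ⟨ht.1.le, by linarith [ht.2]⟩
    · exact (hφ' t ht₀).hasDerivWithinAt
    · exact div_nonpos_of_nonpos_of_nonneg
        (mul_nonpos_of_nonpos_of_nonneg (by linarith [ht.2]) hct) (by positivity)
  have hmono : MonotoneOn φ (Icc x c) := by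
    refine monotoneOn_of_hasDerivWithinAt_nonneg (f' := φ') (convex_Icc _ _)
      (hcont.mono (Icc_subset_Icc_left (by linarith))) (fun t ht ↦ ?_) fun t ht ↦ ?_
    all_goals
      rw [interior_Icc] at ht
      obtain ⟨ht₀, hct⟩ := hpos t ⟨by linarith [ht.1], ht.2.le⟩
    · exact (hφ' t ht₀).hasDerivWithinAt
    · exact div_nonneg (mul_nonneg (by linarith [ht.1]) hct) (by positivity)
  have hφx : φ x = 0 := by simp [φ]
  have : 0 ≤ φ y := by
    rcases le_total y x with h | h
    · exact hφx ▸ hanti ⟨hy₁, h⟩ ⟨by linarith, le_rfl⟩ h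
    · exact hφx ▸ hmono ⟨le_rfl, by linarith⟩ ⟨h, hy₂⟩ h
  linarith

lemma monotone_ofReal_log_max_one : Monotone fun y : ℝ ↦ ENNReal.ofReal (log (max y 1)) :=
  fun _ _ h ↦ ENNReal.ofReal_le_ofReal <|
    log_le_log (one_pos.trans_le (le_max_right _ _)) (max_le_max h le_rfl)

lemma tendsto_ofReal_log_max_one :
    Tendsto (fun y : ℝ ↦ ENNReal.ofReal (log (max y 1))) atTop (𝓝 ∞) :=
  ENNReal.tendsto_ofReal_atTop.comp <| tendsto_log_atTop.comp <|
    tendsto_atTop_mono (fun y ↦ le_max_left y 1) tendsto_id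

lemma eventually_mul_add_sq_le {θ : ℝ} (hθ : θ < 1) (B : ℝ) :
    ∀ᶠ x in atTop, θ * (x + B) ^ 2 ≤ x ^ 2 := by
  have hlim : Tendsto (fun x : ℝ ↦ θ * (1 + B / x) ^ 2) atTop (𝓝 θ) := by
    simpa using (((tendsto_const_nhds (x := (1 : ℝ))).add
      ((tendsto_const_nhds (x := B)).div_atTop tendsto_id)).pow 2).const_mul θ
  filter_upwards [hlim.eventually_lt_const hθ, eventually_gt_atTop 0] with x hx hx₀
  calc θ * (x + B) ^ 2 = θ * (1 + B / x) ^ 2 * x ^ 2 := by field_simp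
    _ ≤ 1 * x ^ 2 := by gcongr
    _ = x ^ 2 := one_mul _

end LogBound

section BoundedIncrements

open Real

variable {ν : Measure ℝ} [IsFiniteMeasure ν] {x B : ℝ}

lemma integrable_pow_sub_of_ae_abs_sub_le (h : ∀ᵐ y ∂ν, |y - x| ≤ B) (k : ℕ) :
    Integrable (fun y ↦ (y - x) ^ k) ν :=
  Integrable.of_bound (by fun_prop) (B ^ k) <| by
    filter_upwards [h] with y hy
    rw [norm_pow, norm_eq_abs]
    exact pow_le_pow_left₀ (abs_nonneg _) hy k

lemma integrable_log_max_one_of_ae_abs_sub_le (h : ∀ᵐ y ∂ν, |y - x| ≤ B) :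
    Integrable (fun y ↦ log (max y 1)) ν :=
  Integrable.of_bound
    (measurable_log.comp (measurable_id.max measurable_const)).aestronglyMeasurable (|x| + B) <| by
    filter_upwards [h] with y hy
    rw [norm_eq_abs, abs_of_nonneg (log_nonneg (le_max_right y 1))]
    calc log (max y 1)
        ≤ max y 1 - 1 := log_le_sub_one_of_pos (one_pos.trans_le (le_max_right y 1))
      _ ≤ |y| := sub_le_iff_le_add.2 <|
          max_le (by linarith [le_abs_self y]) (by linarith [abs_nonneg y])
      _ ≤ |x| + B := by linarith [abs_sub_abs_le_abs_sub y x]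

end BoundedIncrements

section Drift

open Real

lemma drift_div_sub_div_nonpos {m₁ m₂ θ x c : ℝ} (hx : 0 < x) (hc : 0 < c) (hm₂ : 0 ≤ m₂)
    (hθ : θ * c ^ 2 ≤ x ^ 2) (h : m₁ ≤ θ * m₂ / (2 * x)) : m₁ / x - m₂ / (2 * c ^ 2) ≤ 0 := by
  rw [le_div_iff₀ (by positivity)] at h
  rw [sub_nonpos, div_le_div_iff₀ hx (by positivity)]
  nlinarith [mul_le_mul_of_nonneg_right h (sq_nonneg c), mul_le_mul_of_nonneg_left hθ hm₂]

lemma lintegral_ofReal_log_max_one_le {κ : Kernel ℝ ℝ} [IsMarkovKernel κ] {B θ x : ℝ}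
    (hB : ∀ᵐ y ∂(κ x), |y - x| ≤ B) (hx : B + 1 ≤ x) (hθ : θ * (x + B) ^ 2 ≤ x ^ 2)
    (hdrift : mom κ 1 x ≤ θ * mom κ 2 x / (2 * x)) :
    ∫⁻ y, ENNReal.ofReal (log (max y 1)) ∂(κ x) ≤ ENNReal.ofReal (log (max x 1)) := by
  set c := x + B
  obtain ⟨y₀, hy₀⟩ := hB.exists
  have hB₀ : 0 ≤ B := (abs_nonneg _).trans hy₀
  have hx₀ : 0 < x := by linarith
  have hc : 0 < c := by linarith
  have hlog := integrable_log_max_one_of_ae_abs_sub_le hB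
  have hmom₁ := (integrable_pow_sub_of_ae_abs_sub_le hB 1).div_const x
  have hlin : Integrable (fun y ↦ log x + (y - x) ^ 1 / x) (κ x) := (integrable_const _).add hmom₁
  have hmom₂ := (integrable_pow_sub_of_ae_abs_sub_le hB 2).div_const (2 * c ^ 2)
  have hmom₂_nonneg : 0 ≤ mom κ 2 x := integral_nonneg fun y ↦ sq_nonneg _
  have hintegral : ∫ y, log (max y 1) ∂(κ x) ≤ log x :=
    calc ∫ y, log (max y 1) ∂(κ x)
        ≤ ∫ y, (log x + (y - x) ^ 1 / x - (y - x) ^ 2 / (2 * c ^ 2)) ∂(κ x) := by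
          refine integral_mono_ae hlog (hlin.sub hmom₂) ?_
          filter_upwards [hB] with y hy
          rw [max_eq_left (by linarith [abs_le.1 hy]), pow_one]
          exact log_le_taylor_of_abs_sub_le (by linarith) hy
      _ = log x + mom κ 1 x / x - mom κ 2 x / (2 * c ^ 2) := by
          rw [integral_sub hlin hmom₂,
            integral_add (integrable_const _) hmom₁, integral_const, integral_div, integral_div]
          simp [mom]
      _ ≤ log x := by linarith [drift_div_sub_div_nonpos hx₀ hc hmom₂_nonneg hθ hdrift]
  rw [← ofReal_integral_eq_lintegral_ofReal hlog
    (ae_of_all _ fun y ↦ log_nonneg (le_max_right y 1)), max_eq_left (by linarith)]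
  exact ENNReal.ofReal_le_ofReal hintegral

end Drift

section Trajectory

abbrev pastMeasurableSpace (n : ℕ) : MeasurableSpace (ℕ → ℝ) :=
  MeasurableSpace.comap (fun (ω : ℕ → ℝ) (i : Fin (n + 1)) => ω i) inferInstance

lemma measurableSet_pastMeasurableSpace_coord {n i : ℕ} (hi : i ≤ n) {s : Set ℝ}
    (hs : MeasurableSet s) : MeasurableSet[pastMeasurableSpace n] {ω | ω i ∈ s} :=
  ⟨{v | v ⟨i, by omega⟩ ∈ s}, measurable_pi_apply (⟨i, by omega⟩ : Fin (n + 1)) hs, rfl⟩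

def staysAbove (a : ℝ) (N n : ℕ) : Set (ℕ → ℝ) := {ω | ∀ k ∈ Finset.Icc N n, a ≤ ω k}

lemma pastMeasurableSpace_le (n : ℕ) : pastMeasurableSpace n ≤ MeasurableSpace.pi :=
  (measurable_pi_lambda (fun (ω : ℕ → ℝ) (i : Fin (n + 1)) => ω i) fun i ↦
    measurable_pi_apply (i : ℕ)).comap_le

lemma measurableSet_pastMeasurableSpace_inter_staysAbove {N n : ℕ} (hNn : N ≤ n) (c a : ℝ) :
    MeasurableSet[pastMeasurableSpace n] ({ω | ω N ≤ c} ∩ staysAbove a N n) := by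
  have : staysAbove a N n = ⋂ k ∈ Finset.Icc N n, {ω | ω k ∈ Set.Ici a} := by
    ext ω; simp [staysAbove]
  rw [this]
  exact (measurableSet_pastMeasurableSpace_coord hNn measurableSet_Iic).inter <|
    Finset.measurableSet_biInter _ fun k hk ↦
      measurableSet_pastMeasurableSpace_coord (Finset.mem_Icc.1 hk).2 measurableSet_Ici

lemma staysAbove_succ_subset (a : ℝ) (N n : ℕ) : staysAbove a N (n + 1) ⊆ staysAbove a N n :=
  fun _ hω k hk ↦ hω k (Finset.Icc_subset_Icc_right n.le_succ hk)

variable {κ : Kernel ℝ ℝ} {μ : Measure (ℕ → ℝ)}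

lemma IsMarkovTrajectory.setLIntegral_comp_succ (htraj : IsMarkovTrajectory κ μ) {n : ℕ}
    {t : Set (ℕ → ℝ)} (ht : MeasurableSet[pastMeasurableSpace n] t) {f : ℝ → ℝ≥0∞}
    (hf : Measurable f) :
    ∫⁻ ω in t, f (ω (n + 1)) ∂μ = ∫⁻ ω in t, ∫⁻ y, f y ∂(κ (ω n)) ∂μ := by
  have hκ : AEMeasurable (fun ω : ℕ → ℝ ↦ κ (ω n)) (μ.restrict t) :=
    (κ.measurable.comp (measurable_pi_apply n)).aemeasurable
  have hmap : (μ.restrict t).map (fun ω ↦ ω (n + 1)) = (μ.restrict t).bind (fun ω ↦ κ (ω n)) := by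
    ext s hs
    rw [Measure.map_apply (measurable_pi_apply (n + 1)) hs,
      Measure.restrict_apply (measurable_pi_apply (n + 1) hs), Measure.bind_apply hs hκ,
      Set.inter_comm]
    exact htraj n s hs t ht
  rw [← lintegral_map hf (measurable_pi_apply (n + 1)), hmap,
    Measure.lintegral_bind hκ hf.aemeasurable]

end Trajectory

section Recurrence

variable {κ : Kernel ℝ ℝ} {μ : Measure (ℕ → ℝ)} [IsProbabilityMeasure μ] {F : ℝ → ℝ≥0∞} {a : ℝ}

lemma IsMarkovTrajectory.setLIntegral_staysAbove_le (htraj : IsMarkovTrajectory κ μ)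
    (hF : Monotone F) (hdrift : ∀ x, a ≤ x → ∫⁻ y, F y ∂(κ x) ≤ F x) (c : ℝ) {N : ℕ} :
    ∀ n, N ≤ n → ∫⁻ ω in {ω | ω N ≤ c} ∩ staysAbove a N n, F (ω n) ∂μ ≤ F c := by
  refine Nat.le_induction ?_ fun n hNn ih ↦ ?_
  · calc ∫⁻ ω in {ω | ω N ≤ c} ∩ staysAbove a N N, F (ω N) ∂μ
        ≤ ∫⁻ _ in {ω | ω N ≤ c} ∩ staysAbove a N N, F c ∂μ :=
          setLIntegral_mono measurable_const fun ω hω ↦ hF hω.1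
      _ ≤ F c := by
          rw [setLIntegral_const]
          exact mul_le_of_le_one_right' prob_le_one
  · calc ∫⁻ ω in {ω | ω N ≤ c} ∩ staysAbove a N (n + 1), F (ω (n + 1)) ∂μ
        ≤ ∫⁻ ω in {ω | ω N ≤ c} ∩ staysAbove a N n, F (ω (n + 1)) ∂μ :=
          lintegral_mono_set (Set.inter_subset_inter_right _ (staysAbove_succ_subset a N n))
      _ = ∫⁻ ω in {ω | ω N ≤ c} ∩ staysAbove a N n, ∫⁻ y, F y ∂(κ (ω n)) ∂μ :=
          htraj.setLIntegral_comp_succ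
            (measurableSet_pastMeasurableSpace_inter_staysAbove hNn c a) hF.measurable
      _ ≤ ∫⁻ ω in {ω | ω N ≤ c} ∩ staysAbove a N n, F (ω n) ∂μ :=
          setLIntegral_mono (hF.measurable.comp (measurable_pi_apply n)) fun ω hω ↦
            hdrift _ (hω.2 n (Finset.mem_Icc.2 ⟨hNn, le_rfl⟩))
      _ ≤ F c := ih

lemma IsMarkovTrajectory.ae_not_tendsto_atTop_of_staysAbove (htraj : IsMarkovTrajectory κ μ)
    (hF : Monotone F) (hF_top : Tendsto F atTop (𝓝 ∞))
    (hdrift : ∀ x, a ≤ x → ∫⁻ y, F y ∂(κ x) ≤ F x) {c : ℝ} (hFc : F c ≠ ∞) (N : ℕ) :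
    ∀ᵐ ω ∂μ, ω N ≤ c → (∀ k, N ≤ k → a ≤ ω k) → ¬ Tendsto ω atTop atTop := by
  set E : ℕ → Set (ℕ → ℝ) := fun d ↦ {ω | ω N ≤ c} ∩ staysAbove a N (d + N)
  have hE : ∀ d, MeasurableSet (E d) := fun d ↦ pastMeasurableSpace_le _ _
    (measurableSet_pastMeasurableSpace_inter_staysAbove (Nat.le_add_left N d) c a)
  set g : ℕ → (ℕ → ℝ) → ℝ≥0∞ := fun d ↦ (E d).indicator fun ω ↦ F (ω (d + N))
  have hg : ∀ d, Measurable (g d) := fun d ↦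
    (hF.measurable.comp (measurable_pi_apply (d + N))).indicator (hE d)
  have hbound : liminf (fun d ↦ ∫⁻ ω, g d ω ∂μ) atTop ≤ F c := by
    refine (liminf_le_liminf (Eventually.of_forall fun d ↦ ?_)).trans_eq (liminf_const _)
    rw [lintegral_indicator (hE d)]
    exact htraj.setLIntegral_staysAbove_le hF hdrift c (d + N) (Nat.le_add_left N d)
  have hfin : ∀ᵐ ω ∂μ, liminf (fun d ↦ g d ω) atTop < ∞ :=
    ae_lt_top (Measurable.liminf hg)
      ((lintegral_liminf_le hg).trans hbound |>.trans_lt hFc.lt_top).ne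
  filter_upwards [hfin] with ω hω hωN hstay htend
  have hgω : (fun d ↦ g d ω) = fun d ↦ F (ω (d + N)) := funext fun d ↦
    Set.indicator_of_mem (show ω ∈ E d from ⟨hωN, fun k hk ↦ hstay k (Finset.mem_Icc.1 hk).1⟩) _
  have : Tendsto (fun d ↦ g d ω) atTop (𝓝 ∞) :=
    hgω ▸ hF_top.comp (htend.comp (tendsto_add_atTop_nat N))
  exact hω.ne this.liminf_eq

theorem IsMarkovTrajectory.ae_exists_frequently_le (htraj : IsMarkovTrajectory κ μ)
    (hF : Monotone F) (hF_ne_top : ∀ x, F x ≠ ∞) (hF_top : Tendsto F atTop (𝓝 ∞))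
    (hdrift : ∀ᶠ x in atTop, ∫⁻ y, F y ∂(κ x) ≤ F x) :
    ∀ᵐ ω ∂μ, ∃ M : ℝ, ∃ᶠ n in atTop, ω n ≤ M := by
  obtain ⟨a, ha⟩ := eventually_atTop.1 hdrift
  have hae : ∀ᵐ ω ∂μ, ∀ N K : ℕ, ω N ≤ (K : ℝ) → (∀ k, N ≤ k → a ≤ ω k) → ¬ Tendsto ω atTop atTop :=
    ae_all_iff.2 fun N ↦ ae_all_iff.2 fun _ ↦
      htraj.ae_not_tendsto_atTop_of_staysAbove hF hF_top ha (hF_ne_top _) N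
  filter_upwards [hae] with ω hω
  by_contra! h
  obtain ⟨N, hN⟩ := eventually_atTop.1 (h a)
  exact hω N ⌈ω N⌉₊ (Nat.le_ceil _) (fun k hk ↦ (hN k hk).le)
    (tendsto_atTop.2 fun M ↦ (h M).mono fun _ hn ↦ hn.le)

end Recurrence

theorem lamperti_recurrence_criterion_general
    (κ : Kernel ℝ ℝ) [IsMarkovKernel κ]
    (μ : Measure (ℕ → ℝ)) [IsProbabilityMeasure μ]
    (htraj : IsMarkovTrajectory κ μ)
    (B : ℝ) (hB : ∀ x : ℝ, 0 ≤ x → ∀ᵐ y ∂(κ x), |y - x| ≤ B)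
    (θ r : ℝ) (hθ : θ < 1)
    (hdrift : ∀ x : ℝ, r ≤ x → mom κ 1 x ≤ θ * mom κ 2 x / (2 * x)) :
    ∀ᵐ ω ∂μ, ∃ M : ℝ, ∃ᶠ n in atTop, ω n ≤ M := by
  refine htraj.ae_exists_frequently_le monotone_ofReal_log_max_one
    (fun _ ↦ ENNReal.ofReal_ne_top) tendsto_ofReal_log_max_one ?_
  filter_upwards [eventually_ge_atTop 0, eventually_ge_atTop r, eventually_ge_atTop (B + 1),
    eventually_mul_add_sq_le hθ B] with x hx₀ hxr hxB hθx
  exact lintegral_ofReal_log_max_one_le (hB x hx₀) hxB hθx (hdrift x hxr)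

/-- **Lamperti recurrence criterion.** A time-homogeneous Markov chain on `[0,∞)` with
uniformly bounded increments, second increment moment bounded away from zero, and drift
`μ₁(x) ≤ θ μ₂(x)/(2x)` for `x ≥ r` with `θ < 1`, is recurrent:
almost surely `liminf Xₙ < ∞`. -/
theorem lamperti_recurrence_criterion
    (κ : Kernel ℝ ℝ) [IsMarkovKernel κ]
    (μ : Measure (ℕ → ℝ)) [IsProbabilityMeasure μ]
    (htraj : IsMarkovTrajectory κ μ)
    (hstate : ∀ n : ℕ, ∀ᵐ ω ∂μ, 0 ≤ ω n)
    (B : ℝ) (hB : ∀ x : ℝ, 0 ≤ x → ∀ᵐ y ∂(κ x), |y - x| ≤ B)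
    (δ : ℝ) (hδ : 0 < δ) (hμ2 : ∀ x : ℝ, 0 ≤ x → δ ≤ mom κ 2 x)
    (θ r : ℝ) (hθ : θ < 1) (hr : 0 < r)
    (hdrift : ∀ x : ℝ, r ≤ x → mom κ 1 x ≤ θ * mom κ 2 x / (2 * x)) :
    ∀ᵐ ω ∂μ, ∃ M : ℝ, ∃ᶠ n in atTop, ω n ≤ M :=
  lamperti_recurrence_criterion_general κ μ htraj B hB θ r hθ hdrift
end
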